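/- For all integers a_1,…,a_n, every index i with 1 ≤ i ≤ n, and all integers a′_i, a″_i with a′_i + a″_i = a_i + 1, one has M_{n+2}(a_1,…,a_{i−1}, a′_i, 1, 1, a″_i, a_{i+1},…,a_n) = −M_n(a_1,…,a_n). (Operation (b) transforms the matrix M_n into its opposite.) -/

import Mathlib

/-- The elementary matrix `[[a, -1], [1, 0]]`. -/
def genMat (a : ℤ) : Matrix (Fin 2) (Fin 2) ℤ := !![a, -1; 1, 0]

/-- `Mprod [a₁, …, aₙ] = [[aₙ,-1],[1,0]] ⋯ [[a₁,-1],[1,0]]`. -/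
def Mprod (l : List ℤ) : Matrix (Fin 2) (Fin 2) ℤ := ((l.map genMat).reverse).prod

theorem Mprod_append (u v : List ℤ) : Mprod (u ++ v) = Mprod v * Mprod u := by
  simp only [Mprod, List.map_append, List.reverse_append, List.prod_append]

theorem Mprod_singleton (a : ℤ) : Mprod [a] = genMat a := by
  simp only [Mprod, List.map_cons, List.map_nil, List.reverse_singleton, List.prod_singleton]

theorem genMat_mul_genMat_one_mul_genMat_one_mul_genMat (a' a'' : ℤ) :
    genMat a'' * genMat 1 * genMat 1 * genMat a' = -genMat (a' + a'' - 1) := by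
  ext i j
  fin_cases i <;> fin_cases j <;> simp [genMat, Matrix.mul_apply, Fin.sum_univ_two]
  ring

theorem Mprod_quadruple (a' a'' : ℤ) : Mprod [a', 1, 1, a''] = -genMat (a' + a'' - 1) := by
  simp only [Mprod, List.map_cons, List.map_nil, List.reverse_cons, List.reverse_nil,
    List.nil_append, List.cons_append, List.prod_cons, List.prod_nil, mul_one, ← mul_assoc]
  exact genMat_mul_genMat_one_mul_genMat_one_mul_genMat a' a''

/-- Operation (b) transforms the matrix `Mₙ` into its opposite. -/
theorem stmt2 (u v : List ℤ) (a a' a'' : ℤ) (h : a' + a'' = a + 1) :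
    Mprod (u ++ a' :: 1 :: 1 :: a'' :: v) = -Mprod (u ++ a :: v) := by
  have ha : a' + a'' - 1 = a := by omega
  rw [show a' :: 1 :: 1 :: a'' :: v = [a', 1, 1, a''] ++ v from rfl,
    show a :: v = [a] ++ v from rfl, Mprod_append, Mprod_append, Mprod_append, Mprod_append,
    Mprod_quadruple, Mprod_singleton, ha, mul_neg, neg_mul]
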